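/- arXiv:0809.4447 — 5 statements merged into one kernel-verified Lean document; each statement's English description precedes it below -/
import Mathlib

section
/- Let A be a maximal monotone operator on a Hilbert space H. Then for every (x, x*) ∈ H × H one has H_A(x, x*) ≥ ⟨x, x*⟩, where H_A is the Fitzpatrick function of A. -/
/-! The gap `⟪x, x*⟫ - (⟪u, x*⟫ + ⟪x, u*⟫ - ⟪u, u*⟫)` equals `⟪x - u, x* - u*⟫`. Either it is
negative for some `(u, u*) ∈ A`, and that term of the supremum already exceeds `⟪x, x*⟫`, or it
is nonnegative on all of `A`, and then maximality puts `(x, x*)` itself in `A`, where the term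
equals `⟪x, x*⟫`. -/

open scoped RealInnerProductSpace

section

variable {H : Type*} [NormedAddCommGroup H] [InnerProductSpace ℝ H]

theorem real_inner_sub_sub_eq_sub_fitzpatrick_term (x xs u us : H) :
    ⟪x - u, xs - us⟫ = ⟪x, xs⟫ - (⟪u, xs⟫ + ⟪x, us⟫ - ⟪u, us⟫) := by
  simp only [inner_sub_left, inner_sub_right]
  ring

theorem exists_mem_real_inner_le_fitzpatrick_term (A : Set (H × H))
    (hmax : ∀ x xs : H, (∀ u ∈ A, (0 : ℝ) ≤ ⟪x - u.1, xs - u.2⟫) → (x, xs) ∈ A) (x xs : H) :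
    ∃ u ∈ A, ⟪x, xs⟫ ≤ ⟪u.1, xs⟫ + ⟪x, u.2⟫ - ⟪u.1, u.2⟫ := by
  by_cases hrel : ∀ u ∈ A, (0 : ℝ) ≤ ⟪x - u.1, xs - u.2⟫
  · refine ⟨(x, xs), hmax x xs hrel, ?_⟩
    simp
  · push Not at hrel
    obtain ⟨u, hu, hneg⟩ := hrel
    refine ⟨u, hu, ?_⟩
    rw [real_inner_sub_sub_eq_sub_fitzpatrick_term] at hneg
    linarith

end

theorem fitzpatrick_ge_inner_general
    {H : Type*} [NormedAddCommGroup H] [InnerProductSpace ℝ H]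
    (A : Set (H × H))
    (hmax : ∀ x xs : H, (∀ u ∈ A, (0 : ℝ) ≤ inner ℝ (x - u.1) (xs - u.2)) → (x, xs) ∈ A)
    (x xs : H) :
    ((inner ℝ x xs : ℝ) : EReal)
      ≤ ⨆ u ∈ A, (((inner ℝ u.1 xs + inner ℝ x u.2 - inner ℝ u.1 u.2 : ℝ)) : EReal) := by
  obtain ⟨u, hu, hle⟩ := exists_mem_real_inner_le_fitzpatrick_term A hmax x xs
  exact le_iSup₂_of_le u hu (EReal.coe_le_coe_iff.mpr hle)

/-- For a maximal monotone set `A`, the Fitzpatrick function dominates the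
duality pairing everywhere. -/
theorem fitzpatrick_ge_inner
    {H : Type*} [NormedAddCommGroup H] [InnerProductSpace ℝ H]
    (A : Set (H × H))
    (hmono : ∀ p ∈ A, ∀ q ∈ A, (0 : ℝ) ≤ inner ℝ (p.1 - q.1) (p.2 - q.2))
    (hmax : ∀ x xs : H, (∀ u ∈ A, (0 : ℝ) ≤ inner ℝ (x - u.1) (xs - u.2)) → (x, xs) ∈ A)
    (x xs : H) :
    ((inner ℝ x xs : ℝ) : EReal)
      ≤ ⨆ u ∈ A, (((inner ℝ u.1 xs + inner ℝ x u.2 - inner ℝ u.1 u.2 : ℝ)) : EReal) :=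
  fitzpatrick_ge_inner_general A hmax x xs
end

section
/- Let A be a maximal monotone operator on a Hilbert space H with Fitzpatrick function H_A. Then (x, x*) ∈ A if and only if H_A(x, x*) = ⟨x, x*⟩. -/
/-!
The inequality `H_A(x, x*) ≤ ⟪x, x*⟫` says exactly that `(x, x*)` is monotonically related to
every point of `A`, so by maximality it characterizes membership in `A`; on `A` the reverse
inequality holds because the supremum contains the term at `(x, x*)` itself, which is `⟪x, x*⟫`.
-/

open scoped RealInnerProductSpace

section Fitzpatrick

variable {H : Type*} [NormedAddCommGroup H] [InnerProductSpace ℝ H]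

noncomputable def fitzpatrick (A : Set (H × H)) (x xs : H) : EReal :=
  ⨆ u ∈ A, ((⟪u.1, xs⟫ + ⟪x, u.2⟫ - ⟪u.1, u.2⟫ : ℝ) : EReal)

lemma inner_sub_sub_nonneg_iff (x xs u us : H) :
    0 ≤ ⟪x - u, xs - us⟫ ↔ ⟪u, xs⟫ + ⟪x, us⟫ - ⟪u, us⟫ ≤ ⟪x, xs⟫ := by
  rw [inner_sub_left, inner_sub_right, inner_sub_right]
  constructor <;> intro h <;> linarith

lemma fitzpatrick_le_inner_iff (A : Set (H × H)) (x xs : H) :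
    fitzpatrick A x xs ≤ ⟪x, xs⟫ ↔ ∀ u ∈ A, 0 ≤ ⟪x - u.1, xs - u.2⟫ := by
  simp only [fitzpatrick, iSup₂_le_iff, EReal.coe_le_coe_iff, inner_sub_sub_nonneg_iff]

lemma inner_le_fitzpatrick {A : Set (H × H)} {x xs : H} (h : (x, xs) ∈ A) :
    (⟪x, xs⟫ : EReal) ≤ fitzpatrick A x xs :=
  le_iSup₂_of_le (x, xs) h (by simp)

end Fitzpatrick

/-- For a maximal monotone set `A`, membership in `A` is characterized by equality
of the Fitzpatrick function with the duality pairing. -/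
theorem mem_iff_fitzpatrick_eq_inner
    {H : Type*} [NormedAddCommGroup H] [InnerProductSpace ℝ H]
    (A : Set (H × H))
    (hmono : ∀ p ∈ A, ∀ q ∈ A, (0 : ℝ) ≤ inner ℝ (p.1 - q.1) (p.2 - q.2))
    (hmax : ∀ x xs : H, (∀ u ∈ A, (0 : ℝ) ≤ inner ℝ (x - u.1) (xs - u.2)) → (x, xs) ∈ A)
    (x xs : H) :
    (x, xs) ∈ A ↔
      (⨆ u ∈ A, (((inner ℝ u.1 xs + inner ℝ x u.2 - inner ℝ u.1 u.2 : ℝ)) : EReal))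
        = ((inner ℝ x xs : ℝ) : EReal) := by
  change _ ↔ fitzpatrick A x xs = _
  constructor
  · intro hx
    exact le_antisymm ((fitzpatrick_le_inner_iff A x xs).2 fun u hu => hmono _ hx u hu)
      (inner_le_fitzpatrick hx)
  · intro h
    exact hmax x xs ((fitzpatrick_le_inner_iff A x xs).1 h.le)
end

section
/- Let A be maximal monotone on H with Fitzpatrick function H_A, and let H_A* denote the convex conjugate on H × H via the pairing ⟨(x,x*),(y*,y)⟩ = ⟨x, y*⟩ + ⟨x*, y⟩. Then (x, x*) ∈ A if and only if H_A*(x*, x) = ⟨x, x*⟩. -/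
/-!
By monotonicity `H_A(u, u*) = ⟨u, u*⟩` on `A`, so the choice `(u, u*) ∈ A` in the supremum
defining `H_A*(x*, x)` contributes `⟨x, x*⟩ - ⟨x - u, x* - u*⟩`. Thus `H_A*(x*, x) ≤ ⟨x, x*⟩`
makes `(x, x*)` monotonically related to `A`, hence a point of `A` by maximality. Conversely,
for `(x, x*) ∈ A` the bound `H_A(u, u*) ≥ ⟨x, u*⟩ + ⟨u, x*⟩ - ⟨x, x*⟩` caps every term of the
supremum at `⟨x, x*⟩`, and the choice `(u, u*) = (x, x*)` attains it.
-/

open RealInnerProductSpace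

namespace Fitzpatrick

variable {H : Type*} [SeminormedAddCommGroup H] [InnerProductSpace ℝ H]

def IsMonotoneSet (A : Set (H × H)) : Prop :=
  ∀ p ∈ A, ∀ q ∈ A, 0 ≤ ⟪p.1 - q.1, p.2 - q.2⟫

noncomputable def fitzpatrick (A : Set (H × H)) (q : H × H) : EReal :=
  ⨆ u ∈ A, ((⟪u.1, q.2⟫ + ⟪q.1, u.2⟫ - ⟪u.1, u.2⟫ : ℝ) : EReal)

/-- `fitzpatrickConj A x xs` is `H_A*(x*, x)`: the arguments are swapped with respect to the
paper's notation. -/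
noncomputable def fitzpatrickConj (A : Set (H × H)) (x xs : H) : EReal :=
  ⨆ q : H × H, ((⟪q.1, xs⟫ + ⟪x, q.2⟫ : ℝ) : EReal) - fitzpatrick A q

theorem inner_add_inner_sub_inner (x xs u us : H) :
    ⟪u, xs⟫ + ⟪x, us⟫ - ⟪u, us⟫ = ⟪x, xs⟫ - ⟪x - u, xs - us⟫ := by
  simp only [inner_sub_left, inner_sub_right]
  ring

theorem le_fitzpatrick {A : Set (H × H)} {u : H × H} (hu : u ∈ A) (q : H × H) :
    ((⟪u.1, q.2⟫ + ⟪q.1, u.2⟫ - ⟪u.1, u.2⟫ : ℝ) : EReal) ≤ fitzpatrick A q :=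
  le_iSup₂_of_le (f := fun u (_ : u ∈ A) =>
    ((⟪u.1, q.2⟫ + ⟪q.1, u.2⟫ - ⟪u.1, u.2⟫ : ℝ) : EReal)) u hu le_rfl

theorem fitzpatrick_eq_inner_of_mem {A : Set (H × H)} (hA : IsMonotoneSet A) {q : H × H}
    (hq : q ∈ A) : fitzpatrick A q = (⟪q.1, q.2⟫ : EReal) := by
  refine le_antisymm (iSup₂_le fun u hu => ?_) ?_
  · have hqu := hA q hq u hu
    rw [EReal.coe_le_coe_iff, inner_add_inner_sub_inner]
    linarith
  · simpa using le_fitzpatrick hq q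

theorem fitzpatrickConj_le_inner_of_mem {A : Set (H × H)} {x xs : H} (hx : (x, xs) ∈ A) :
    fitzpatrickConj A x xs ≤ (⟪x, xs⟫ : EReal) := by
  refine iSup_le fun q => ?_
  calc ((⟪q.1, xs⟫ + ⟪x, q.2⟫ : ℝ) : EReal) - fitzpatrick A q
      ≤ ((⟪q.1, xs⟫ + ⟪x, q.2⟫ : ℝ) : EReal) - ((⟪x, q.2⟫ + ⟪q.1, xs⟫ - ⟪x, xs⟫ : ℝ) : EReal) :=
        EReal.sub_le_sub le_rfl (le_fitzpatrick hx q)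
    _ = (⟪x, xs⟫ : EReal) := by
        rw [← EReal.coe_sub]
        congr 1
        ring

theorem inner_sub_le_fitzpatrickConj {A : Set (H × H)} (hA : IsMonotoneSet A) {u : H × H}
    (hu : u ∈ A) (x xs : H) :
    ((⟪x, xs⟫ - ⟪x - u.1, xs - u.2⟫ : ℝ) : EReal) ≤ fitzpatrickConj A x xs := by
  refine le_iSup_of_le u ?_
  rw [fitzpatrick_eq_inner_of_mem hA hu, ← EReal.coe_sub, inner_add_inner_sub_inner]

theorem inner_le_fitzpatrickConj_of_mem {A : Set (H × H)} (hA : IsMonotoneSet A) {x xs : H}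
    (hx : (x, xs) ∈ A) : (⟪x, xs⟫ : EReal) ≤ fitzpatrickConj A x xs := by
  simpa using inner_sub_le_fitzpatrickConj hA hx x xs

theorem inner_nonneg_of_fitzpatrickConj_le {A : Set (H × H)} (hA : IsMonotoneSet A) {x xs : H}
    (h : fitzpatrickConj A x xs ≤ (⟪x, xs⟫ : EReal)) :
    ∀ u ∈ A, 0 ≤ ⟪x - u.1, xs - u.2⟫ := fun u hu => by
  have hle := (inner_sub_le_fitzpatrickConj hA hu x xs).trans h
  rw [EReal.coe_le_coe_iff] at hle
  linarith

end Fitzpatrick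

open Fitzpatrick in
/-- For a maximal monotone set `A`, `(x, x*) ∈ A` iff the convex conjugate of the
Fitzpatrick function satisfies `H_A^*(x*, x) = ⟨x, x*⟩`. -/
theorem mem_iff_fitzpatrick_conj_eq_inner
    {H : Type*} [NormedAddCommGroup H] [InnerProductSpace ℝ H]
    (A : Set (H × H))
    (hmono : ∀ p ∈ A, ∀ q ∈ A, (0 : ℝ) ≤ inner ℝ (p.1 - q.1) (p.2 - q.2))
    (hmax : ∀ x xs : H, (∀ u ∈ A, (0 : ℝ) ≤ inner ℝ (x - u.1) (xs - u.2)) → (x, xs) ∈ A)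
    (x xs : H) :
    (x, xs) ∈ A ↔
      (⨆ q : H × H,
        ((((inner ℝ q.1 xs + inner ℝ x q.2 : ℝ)) : EReal)
          - ⨆ u ∈ A, (((inner ℝ u.1 q.2 + inner ℝ q.1 u.2 - inner ℝ u.1 u.2 : ℝ)) : EReal)))
        = ((inner ℝ x xs : ℝ) : EReal) := by
  change (x, xs) ∈ A ↔ fitzpatrickConj A x xs = (⟪x, xs⟫ : EReal)
  refine ⟨fun hx => ?_, fun h => ?_⟩
  · exact le_antisymm (fitzpatrickConj_le_inner_of_mem hx)
      (inner_le_fitzpatrickConj_of_mem hmono hx)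
  · exact hmax x xs (inner_nonneg_of_fitzpatrickConj_le hmono h.le)
end

section
/- The Fitzpatrick function of a maximal monotone operator A is minimal among convex functions f : H × H → ℝ ∪ {+∞} satisfying f(x, x*) ≥ ⟨x, x*⟩ everywhere and f(x, x*) = ⟨x, x*⟩ on A; more precisely, for any such convex f, H_A(x, x*) ≤ f(x, x*) for all (x, x*). -/
/-!
For `(u, u*) ∈ A` and `t ∈ (0, 1)`, evaluate `f` on `t • (x, x*) + (1 - t) • (u, u*)`: the
pairing lower bound and convexity, with `f (u, u*) = ⟨u, u*⟩`, sandwich the pairing of this point.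
Expanding the pairing and dividing by `t` leaves
`⟨u, x*⟩ + ⟨x, u*⟩ - ⟨u, u*⟩ + O(t) ≤ f (x, x*)`, and `t → 0` gives the claim.
-/

open Set Filter Topology

lemma le_of_forall_mem_Ioo_add_mul_le {a b c : ℝ} (h : ∀ t ∈ Ioo (0 : ℝ) 1, a + t * c ≤ b) :
    a ≤ b := by
  have hlim : Tendsto (fun t : ℝ => a + t * c) (𝓝[>] 0) (𝓝 a) := by
    have hcont : Continuous fun t : ℝ => a + t * c := by fun_prop
    simpa using (hcont.tendsto 0).mono_left nhdsWithin_le_nhds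
  exact le_of_tendsto hlim (eventually_of_mem (Ioo_mem_nhdsGT one_pos) h)

lemma Convex.apply_combo_le_of_epigraph {E : Type*} [AddCommGroup E] [Module ℝ E]
    {f : E → EReal} (hconv : Convex ℝ {q : E × ℝ | f q.1 ≤ (q.2 : EReal)})
    {x y : E} {a b t : ℝ} (hx : f x ≤ a) (hy : f y ≤ b) (ht₀ : 0 ≤ t) (ht₁ : t ≤ 1) :
    f (t • x + (1 - t) • y) ≤ ((t * a + (1 - t) * b : ℝ) : EReal) := by
  simpa using hconv (show ((x, a) : E × ℝ) ∈ _ from hx) (show ((y, b) : E × ℝ) ∈ _ from hy)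
    ht₀ (sub_nonneg.2 ht₁) (add_sub_cancel t 1)

section InnerProductSpace

variable {H : Type*} [NormedAddCommGroup H] [InnerProductSpace ℝ H]

local notation "⟪" x ", " y "⟫" => inner ℝ x y

lemma inner_smul_add_smul (x y u v : H) (t : ℝ) :
    ⟪t • x + (1 - t) • u, t • y + (1 - t) • v⟫
      = t ^ 2 * ⟪x, y⟫ + t * (1 - t) * (⟪x, v⟫ + ⟪u, y⟫) + (1 - t) ^ 2 * ⟪u, v⟫ := by
  simp only [inner_add_left, inner_add_right, real_inner_smul_left, real_inner_smul_right]
  ring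

lemma fitzpatrick_term_le_of_forall_mem_Ioo {x y u v : H} {r : ℝ}
    (h : ∀ t ∈ Ioo (0 : ℝ) 1,
      ⟪t • x + (1 - t) • u, t • y + (1 - t) • v⟫ ≤ t * r + (1 - t) * ⟪u, v⟫) :
    ⟪u, y⟫ + ⟪x, v⟫ - ⟪u, v⟫ ≤ r := by
  refine le_of_forall_mem_Ioo_add_mul_le (c := ⟪x, y⟫ - (⟪u, y⟫ + ⟪x, v⟫ - ⟪u, v⟫)) fun t ht => ?_
  have hineq := h t ht
  rw [inner_smul_add_smul] at hineq
  refine le_of_mul_le_mul_left ?_ ht.1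
  linear_combination hineq

end InnerProductSpace

/-- Minimality of the Fitzpatrick function: any convex function `f` on `H × H` that
dominates the duality pairing everywhere and agrees with it on `A` dominates `H_A`. -/
theorem fitzpatrick_minimal
    {H : Type*} [NormedAddCommGroup H] [InnerProductSpace ℝ H]
    (A : Set (H × H)) (f : H × H → EReal)
    (hconv : Convex ℝ {q : (H × H) × ℝ | f q.1 ≤ ((q.2 : ℝ) : EReal)})
    (hge : ∀ p : H × H, ((inner ℝ p.1 p.2 : ℝ) : EReal) ≤ f p)
    (heq : ∀ p ∈ A, f p = ((inner ℝ p.1 p.2 : ℝ) : EReal)) :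
    ∀ p : H × H,
      (⨆ u ∈ A, (((inner ℝ u.1 p.2 + inner ℝ p.1 u.2 - inner ℝ u.1 u.2 : ℝ)) : EReal)) ≤ f p := by
  intro p
  refine iSup₂_le fun u hu => ?_
  induction hp : f p using EReal.rec with
  | bot => simpa [hp] using hge p
  | top => exact le_top
  | coe r =>
    refine EReal.coe_le_coe_iff.2 (fitzpatrick_term_le_of_forall_mem_Ioo fun t ht => ?_)
    have hcombo := hconv.apply_combo_le_of_epigraph hp.le (heq u hu).le ht.1.le ht.2.le
    simpa using EReal.coe_le_coe_iff.1 ((hge _).trans hcombo)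
end

section
/- Let A be maximal monotone on a Hilbert space H, and let x, y, k, ℓ : [0, T] → H with k, ℓ of bounded variation and x, y continuous, such that for all 0 ≤ s ≤ t ≤ T and all continuous u, u* : [0,T] → H with (u(r), u*(r)) ∈ A for all r ∈ [s,t]: ∫_s^t ⟨x(r) − u(r), dk(r) − u*(r) dr⟩ ≥ 0, and the same for (y, ℓ). If additionally for every ε > 0 the function r ↦ J_ε((x(r)+y(r))/2) together with A_ε((x(r)+y(r))/2) is a valid continuous selection in A, then ∫_s^t ⟨x(r) − y(r), dk(r) − dℓ(r)⟩ ≥ 0 for all 0 ≤ s ≤ t ≤ T. -/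
open MeasureTheory

/-- `I` is the Riemann–Stieltjes integral `∫_s^t ⟨f(r), dk(r)⟩`, computed as the limit
of left-endpoint Riemann–Stieltjes sums along partitions of `[s,t]` of small mesh. -/
def IsRSIntegral {H : Type*} [NormedAddCommGroup H] [InnerProductSpace ℝ H]
    (f k : ℝ → H) (s t : ℝ) (I : ℝ) : Prop :=
  ∀ ε > (0 : ℝ), ∃ δ > (0 : ℝ), ∀ n : ℕ, ∀ p : ℕ → ℝ,
    p 0 = s → p n = t → (∀ i < n, p i ≤ p (i + 1)) → (∀ i < n, p (i + 1) - p i < δ) →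
    |(∑ i ∈ Finset.range n, (inner ℝ (f (p i)) (k (p (i + 1)) - k (p i)) : ℝ)) - I| < ε

/-!
Put `z = (x + y) / 2` and test the inequalities for `(x, k)` and `(y, ℓ)` against the selection
`u = J_ε ∘ z`, `u* = A_ε ∘ z`. Since `(x - u) + (y - u) = 2ε A_ε z`, the two `dr`-integrals add up
to `2ε ∫ ‖A_ε z‖² ≥ 0`, while the two Stieltjes integrals add up to
`½ ∫ ⟨x - y, d(k - ℓ)⟩ + ∫ ⟨ε A_ε z, dk⟩ + ∫ ⟨ε A_ε z, dℓ⟩`. The last two terms are bounded by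
`sup ‖ε A_ε z‖ · (Var k + Var ℓ)`, which tends to `0` because `ε A_ε → 0` uniformly on the compact
set `z([s, t])` once it lies in the closure of `Dom A`.

That `z(r)` lies in this closure is the delicate point. At almost every `r` the variation of `k`
grows at most linearly to the right of `r` (Lebesgue's theorem for the monotone function
`ρ ↦ Var(k, [0, ρ])`); testing against a constant selection `(a, a*)` on `[r, r + h]` and letting
`h → 0` gives `⟨x(r) - a, a*⟩ ≤ C ‖x(r) - a‖` for all `(a, a*) ∈ A`, and likewise for `y`. Taking
`(a, a*) = (J_ε z(r), A_ε z(r))` then forces `‖z(r) - J_ε z(r)‖ = O(√ε)`. Continuity of `z` carries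
this from a dense set of `r` to all of `[s, t]`.

The Riemann–Stieltjes integral of a continuous function against a function of bounded variation is
obtained as the limit of a Cauchy net along the filter of fine partitions, by comparing two
partitions with their common refinement.
-/

open Set Filter Topology

lemma monotoneOn_Iic_of_le_succ {α : Type*} [Preorder α] {p : ℕ → α} {n : ℕ}
    (hp : ∀ i < n, p i ≤ p (i + 1)) : MonotoneOn p (Iic n) := by
  intro i _ j hj hij
  induction j, hij using Nat.le_induction with
  | base => exact le_rfl
  | succ j hij ih =>
    have hjn : j < n := Nat.lt_of_succ_le hj
    exact (ih (mem_Iic.2 hjn.le)).trans (hp j hjn)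

lemma sum_norm_sub_le_eVariationOn {α E : Type*} [LinearOrder α] [NormedAddCommGroup E]
    {g : α → E} {S : Set α} (hg : BoundedVariationOn g S) {N : ℕ} {r : ℕ → α}
    (hr : MonotoneOn r (Iic N)) (hrS : ∀ j ≤ N, r j ∈ S) :
    ∑ j ∈ Finset.range N, ‖g (r (j + 1)) - g (r j)‖ ≤ (eVariationOn g S).toReal := by
  have hsum := eVariationOn.sum_le_of_monotoneOn_Iic (f := g) hr hrS
  calc ∑ j ∈ Finset.range N, ‖g (r (j + 1)) - g (r j)‖
      = (∑ j ∈ Finset.range N, edist (g (r (j + 1))) (g (r j))).toReal := by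
        rw [ENNReal.toReal_sum fun _ _ => edist_ne_top _ _]
        simp only [edist_dist, dist_eq_norm, ENNReal.toReal_ofReal (norm_nonneg _)]
    _ ≤ (eVariationOn g S).toReal := ENNReal.toReal_mono hg hsum

lemma sum_sum_Ico_eq_sum_Ico {M : Type*} [AddCommMonoid M] (F : ℕ → M) {σ : ℕ → ℕ} {n : ℕ}
    (hσ : MonotoneOn σ (Iic n)) :
    ∑ i ∈ Finset.range n, ∑ j ∈ Finset.Ico (σ i) (σ (i + 1)), F j
      = ∑ j ∈ Finset.Ico (σ 0) (σ n), F j := by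
  induction n with
  | zero => simp
  | succ n ih =>
    rw [Finset.sum_range_succ, ih (hσ.mono (Iic_subset_Iic.2 n.le_succ)),
      Finset.sum_Ico_consecutive _ (hσ (by simp) (by simp) n.zero_le)
        (hσ (by simp) (by simp) n.le_succ)]

lemma le_of_forall_pos_le_add_mul {a b c : ℝ} (h : ∀ β > 0, a ≤ b + β * c) : a ≤ b := by
  have hlim : Tendsto (fun β => b + β * c) (𝓝[>] 0) (𝓝 b) := by
    have hcont : Continuous fun β : ℝ => b + β * c := by fun_prop
    simpa using (hcont.tendsto 0).mono_left nhdsWithin_le_nhds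
  exact ge_of_tendsto hlim (eventually_nhdsWithin_of_forall h)

lemma le_add_sqrt_of_two_mul_sq_le {q a b : ℝ} (ha : 0 ≤ a) (hb : 0 ≤ b)
    (h : 2 * q ^ 2 ≤ a + b * q) : q ≤ b + √a := by
  by_contra! hlt
  have hq' : 0 < q := by linarith [Real.sqrt_nonneg a]
  have h1 : (b + √a) * q < q * q := mul_lt_mul_of_pos_right hlt hq'
  have h2 : √a * √a ≤ √a * q := mul_le_mul_of_nonneg_left (by linarith) (Real.sqrt_nonneg a)
  nlinarith [Real.mul_self_sqrt ha]

lemma forall_mem_Icc_of_ae_mem {X : Type*} [TopologicalSpace X] {z : ℝ → X} {C : Set X}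
    {s t : ℝ} (hC : IsClosed C) (hst : s < t) (hz : ContinuousOn z (Icc s t))
    (hae : ∀ᵐ r, r ∈ Ioo s t → z r ∈ C) : ∀ r ∈ Icc s t, z r ∈ C := by
  set D := Ioo s t ∩ {r | r ∈ Ioo s t → z r ∈ C}
  have hD : Icc s t ⊆ closure D := by
    rw [← closure_Ioo hst.ne]
    exact closure_minimal
      ((Measure.dense_of_ae hae).open_subset_closure_inter isOpen_Ioo) isClosed_closure
  have hDs : closure D ⊆ Icc s t :=
    (closure_mono inter_subset_left).trans (closure_Ioo hst.ne).subset
  intro r hr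
  refine closure_minimal ?_ hC ((hz.mono hDs).image_closure ⟨r, hD hr, rfl⟩)
  rintro _ ⟨ρ, hρ, rfl⟩
  exact hρ.2 hρ.1

lemma ae_eventually_eVariationOn_Icc_le {E : Type*} [NormedAddCommGroup E] {k : ℝ → E} {a b : ℝ}
    (hk : BoundedVariationOn k (Icc a b)) :
    ∀ᵐ r, r ∈ Ioo a b →
      ∃ C ≥ 0, ∀ᶠ ρ in 𝓝[>] r, (eVariationOn k (Icc r ρ)).toReal ≤ C * (ρ - r) := by
  rcases lt_or_ge b a with hba | hab
  · exact ae_of_all _ fun r hr => absurd (hr.1.trans hr.2) hba.not_gt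
  set V := variationOnFromTo k (Icc a b) a
  have hV : MonotoneOn V (Icc a b) :=
    variationOnFromTo.monotoneOn hk.locallyBoundedVariationOn (left_mem_Icc.2 hab)
  filter_upwards [hV.ae_differentiableWithinAt_of_mem] with r hdiff hr
  have hd : DifferentiableAt ℝ V r :=
    (hdiff (Ioo_subset_Icc_self hr)).differentiableAt (Icc_mem_nhds hr.1 hr.2)
  obtain ⟨C, hC, hCV⟩ := hd.hasDerivAt.isBigO_sub.exists_pos
  refine ⟨C, hC.le, ?_⟩
  filter_upwards [nhdsWithin_le_nhds hCV.bound, Ioo_mem_nhdsGT hr.2] with ρ hρ hρb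
  have hIcc : Icc a b ∩ Icc r ρ = Icc r ρ := inter_eq_right.2 (Icc_subset_Icc hr.1.le hρb.2.le)
  have hVρ : V ρ - V r = (eVariationOn k (Icc r ρ)).toReal := by
    rw [variationOnFromTo.sub_right hk.locallyBoundedVariationOn (left_mem_Icc.2 hab)
      (Ioo_subset_Icc_self ⟨hr.1.trans hρb.1, hρb.2⟩) (Ioo_subset_Icc_self hr),
      variationOnFromTo.eq_of_le _ _ hρb.1.le, hIcc]
  rw [← hVρ]
  simpa [Real.norm_eq_abs, abs_of_pos (sub_pos.2 hρb.1)] using (le_abs_self _).trans hρ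

section RiemannStieltjes

variable {H : Type*} [NormedAddCommGroup H] [InnerProductSpace ℝ H]

def IsPartition (s t : ℝ) (P : ℕ × (ℕ → ℝ)) : Prop :=
  P.2 0 = s ∧ P.2 P.1 = t ∧ ∀ i < P.1, P.2 i ≤ P.2 (i + 1)

def finePartitions (s t : ℝ) : Filter (ℕ × (ℕ → ℝ)) :=
  ⨅ δ > 0, 𝓟 {P | IsPartition s t P ∧ ∀ i < P.1, P.2 (i + 1) - P.2 i < δ}

def stieltjesSum (f g : ℝ → H) (P : ℕ × (ℕ → ℝ)) : ℝ :=
  ∑ i ∈ Finset.range P.1, inner ℝ (f (P.2 i)) (g (P.2 (i + 1)) - g (P.2 i))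

lemma hasBasis_finePartitions (s t : ℝ) :
    (finePartitions s t).HasBasis (fun δ : ℝ => 0 < δ)
      fun δ => {P | IsPartition s t P ∧ ∀ i < P.1, P.2 (i + 1) - P.2 i < δ} := by
  refine hasBasis_biInf_principal' (fun δ hδ δ' hδ' => ?_) ⟨1, one_pos⟩
  refine ⟨min δ δ', lt_min hδ hδ', ?_, ?_⟩ <;>
    exact fun P hP => ⟨hP.1, fun i hi => (hP.2 i hi).trans_le (by simp)⟩

lemma isRSIntegral_iff_tendsto {f g : ℝ → H} {s t I : ℝ} :
    IsRSIntegral f g s t I ↔ Tendsto (stieltjesSum f g) (finePartitions s t) (𝓝 I) := by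
  rw [(hasBasis_finePartitions s t).tendsto_iff Metric.nhds_basis_ball]
  simp only [IsRSIntegral, IsPartition, stieltjesSum, Prod.forall, mem_ofPred_eq, Metric.mem_ball,
    Real.dist_eq, and_imp]

lemma IsPartition.monotoneOn {s t : ℝ} {P : ℕ × (ℕ → ℝ)} (hP : IsPartition s t P) :
    MonotoneOn P.2 (Iic P.1) :=
  monotoneOn_Iic_of_le_succ hP.2.2

lemma IsPartition.mem_Icc {s t : ℝ} {P : ℕ × (ℕ → ℝ)} (hP : IsPartition s t P) {i : ℕ}
    (hi : i ≤ P.1) : P.2 i ∈ Icc s t := by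
  have hm := hP.monotoneOn
  exact ⟨hP.1 ▸ hm (by simp) hi i.zero_le, hP.2.1 ▸ hm hi (mem_Iic.2 le_rfl) hi⟩

lemma exists_finePartition {s t δ : ℝ} (hst : s ≤ t) (hδ : 0 < δ) :
    ∃ P, IsPartition s t P ∧ ∀ i < P.1, P.2 (i + 1) - P.2 i < δ := by
  obtain ⟨n, hn⟩ := exists_nat_gt ((t - s) / δ)
  have hn0 : (0 : ℝ) < n := (div_nonneg (sub_nonneg.2 hst) hδ.le).trans_lt hn
  have hstep : (t - s) / n < δ := by
    rw [div_lt_iff₀ hn0]; rwa [div_lt_iff₀ hδ, mul_comm] at hn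
  refine ⟨(n, fun i => s + i * ((t - s) / n)), ⟨by simp, by field_simp; ring, fun i _ => ?_⟩,
    fun i _ => ?_⟩
  · push_cast; nlinarith [div_nonneg (sub_nonneg.2 hst) hn0.le]
  · push_cast; linarith

lemma finePartitions_neBot {s t : ℝ} (hst : s ≤ t) : (finePartitions s t).NeBot :=
  (hasBasis_finePartitions s t).neBot_iff.2 fun hδ => exists_finePartition hst hδ

lemma abs_stieltjesSum_le {f g : ℝ → H} {s t M : ℝ} {P : ℕ × (ℕ → ℝ)} (hP : IsPartition s t P)
    (hM : ∀ r ∈ Icc s t, ‖f r‖ ≤ M) (hg : BoundedVariationOn g (Icc s t)) :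
    |stieltjesSum f g P| ≤ M * (eVariationOn g (Icc s t)).toReal := by
  have hM0 : 0 ≤ M := (norm_nonneg _).trans (hM _ (hP.mem_Icc P.1.zero_le))
  calc |stieltjesSum f g P|
      ≤ ∑ i ∈ Finset.range P.1, M * ‖g (P.2 (i + 1)) - g (P.2 i)‖ := by
        refine (Finset.abs_sum_le_sum_abs _ _).trans (Finset.sum_le_sum fun i hi => ?_)
        refine (abs_real_inner_le_norm _ _).trans (mul_le_mul_of_nonneg_right ?_ (norm_nonneg _))
        exact hM _ (hP.mem_Icc (Finset.mem_range.1 hi).le)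
    _ ≤ M * (eVariationOn g (Icc s t)).toReal := by
        rw [← Finset.mul_sum]
        exact mul_le_mul_of_nonneg_left
          (sum_norm_sub_le_eVariationOn hg hP.monotoneOn fun j hj => hP.mem_Icc hj) hM0

lemma IsRSIntegral.abs_le {f g : ℝ → H} {s t I M : ℝ} (hI : IsRSIntegral f g s t I)
    (hst : s ≤ t) (hM : ∀ r ∈ Icc s t, ‖f r‖ ≤ M) (hg : BoundedVariationOn g (Icc s t)) :
    |I| ≤ M * (eVariationOn g (Icc s t)).toReal := by
  have := finePartitions_neBot hst
  refine le_of_tendsto (isRSIntegral_iff_tendsto.1 hI).abs ?_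
  filter_upwards [(hasBasis_finePartitions s t).mem_of_mem one_pos] with P hP
  exact abs_stieltjesSum_le hP.1 hM hg

lemma IsRSIntegral.eq_zero_of_same {f g : ℝ → H} {s I : ℝ} (hI : IsRSIntegral f g s s I) :
    I = 0 := by
  by_contra hI0
  obtain ⟨δ, -, hδ⟩ := hI |I| (abs_pos.2 hI0)
  simpa using hδ 0 (fun _ => s) rfl rfl (by simp) (by simp)

/-- `σ i` is the position in `R` of the `i`-th point of `P`. -/
def IsRefinement (R P : ℕ × (ℕ → ℝ)) (σ : ℕ → ℕ) : Prop :=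
  MonotoneOn σ (Iic P.1) ∧ σ 0 = 0 ∧ σ P.1 = R.1 ∧ ∀ i ≤ P.1, R.2 (σ i) = P.2 i

namespace IsRefinement

variable {R P : ℕ × (ℕ → ℝ)} {σ : ℕ → ℕ}

lemma lt_of_mem_Ico (hR : IsRefinement R P σ) {i j : ℕ} (hi : i < P.1)
    (hj : j ∈ Finset.Ico (σ i) (σ (i + 1))) : j < R.1 :=
  hR.2.2.1 ▸ (Finset.mem_Ico.1 hj).2.trans_le (hR.1 (mem_Iic.2 hi) (mem_Iic.2 le_rfl) hi)

lemma mem_Icc_of_mem_Ico (hR : IsRefinement R P σ) (hRm : MonotoneOn R.2 (Iic R.1)) {i j : ℕ}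
    (hi : i < P.1) (hj : j ∈ Finset.Ico (σ i) (σ (i + 1))) : R.2 j ∈ Icc (P.2 i) (P.2 (i + 1)) := by
  have hjR := hR.lt_of_mem_Ico hi hj
  obtain ⟨hσ, -, hσn, hPR⟩ := hR
  have hσR : σ (i + 1) ≤ R.1 := hσn ▸ hσ (mem_Iic.2 hi) (mem_Iic.2 le_rfl) hi
  rw [Finset.mem_Ico] at hj
  rw [← hPR i hi.le, ← hPR (i + 1) hi]
  exact ⟨hRm (mem_Iic.2 (hj.1.trans hjR.le)) (mem_Iic.2 hjR.le) hj.1,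
    hRm (mem_Iic.2 hjR.le) (mem_Iic.2 hσR) hj.2.le⟩

lemma isPartition (hR : IsRefinement R P σ) (hRm : MonotoneOn R.2 (Iic R.1)) {s t : ℝ}
    (hP : IsPartition s t P) : IsPartition s t R := by
  obtain ⟨-, hσ0, hσn, hPR⟩ := hR
  refine ⟨?_, ?_, fun i hi => hRm (mem_Iic.2 hi.le) (mem_Iic.2 hi) i.le_succ⟩
  · rw [← hσ0, hPR 0 (Nat.zero_le _), hP.1]
  · rw [← hσn, hPR P.1 le_rfl, hP.2.1]

end IsRefinement

lemma abs_stieltjesSum_sub_le_of_isRefinement {f g : ℝ → H} {R P : ℕ × (ℕ → ℝ)} {σ : ℕ → ℕ}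
    (hR : IsRefinement R P σ) {η : ℝ}
    (hf : ∀ i < P.1, ∀ j ∈ Finset.Ico (σ i) (σ (i + 1)), ‖f (P.2 i) - f (R.2 j)‖ ≤ η) :
    |stieltjesSum f g P - stieltjesSum f g R|
      ≤ η * ∑ j ∈ Finset.range R.1, ‖g (R.2 (j + 1)) - g (R.2 j)‖ := by
  obtain ⟨hσ, hσ0, hσn, hPR⟩ := hR
  set Δ : ℕ → H := fun j => g (R.2 (j + 1)) - g (R.2 j)
  have hblocks : ∀ F : ℕ → ℝ, ∑ j ∈ Finset.range R.1, F j
      = ∑ i ∈ Finset.range P.1, ∑ j ∈ Finset.Ico (σ i) (σ (i + 1)), F j := fun F => by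
    rw [sum_sum_Ico_eq_sum_Ico F hσ, hσ0, hσn, Finset.range_eq_Ico]
  have htelescope : ∀ i < P.1,
      g (P.2 (i + 1)) - g (P.2 i) = ∑ j ∈ Finset.Ico (σ i) (σ (i + 1)), Δ j := fun i hi => by
    rw [Finset.sum_Ico_eq_sub _ (hσ (mem_Iic.2 hi.le) (mem_Iic.2 hi) (by omega))]
    simp only [Δ, Finset.sum_range_sub fun j => g (R.2 j)]
    rw [hPR i hi.le, hPR (i + 1) hi]
    abel
  have hdiff : stieltjesSum f g P - stieltjesSum f g R = ∑ i ∈ Finset.range P.1,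
      ∑ j ∈ Finset.Ico (σ i) (σ (i + 1)), inner ℝ (f (P.2 i) - f (R.2 j)) (Δ j) := by
    rw [stieltjesSum, stieltjesSum, hblocks, ← Finset.sum_sub_distrib]
    refine Finset.sum_congr rfl fun i hi => ?_
    rw [htelescope i (Finset.mem_range.1 hi), inner_sum, ← Finset.sum_sub_distrib]
    simp only [Δ, inner_sub_left]
  calc |stieltjesSum f g P - stieltjesSum f g R|
      ≤ ∑ i ∈ Finset.range P.1, ∑ j ∈ Finset.Ico (σ i) (σ (i + 1)), η * ‖Δ j‖ := by
        rw [hdiff]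
        refine (Finset.abs_sum_le_sum_abs _ _).trans (Finset.sum_le_sum fun i hi =>
          (Finset.abs_sum_le_sum_abs _ _).trans (Finset.sum_le_sum fun j hj => ?_))
        exact (abs_real_inner_le_norm _ _).trans
          (mul_le_mul_of_nonneg_right (hf i (Finset.mem_range.1 hi) j hj) (norm_nonneg _))
    _ = η * ∑ j ∈ Finset.range R.1, ‖Δ j‖ := by simp only [hblocks, Finset.mul_sum]

noncomputable def sortedPartition (S : Finset ℝ) : ℕ × (ℕ → ℝ) :=
  (S.card - 1, fun j => if h : j < S.card then S.orderEmbOfFin rfl ⟨j, h⟩ else 0)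

lemma monotoneOn_sortedPartition (S : Finset ℝ) :
    MonotoneOn (sortedPartition S).2 (Iic (sortedPartition S).1) := by
  intro i hi j hj hij
  rcases lt_or_ge j S.card with hjS | hjS
  · simp only [sortedPartition, dif_pos (hij.trans_lt hjS), dif_pos hjS]
    exact (S.orderEmbOfFin rfl).monotone (Fin.mk_le_mk.2 hij)
  · obtain rfl : i = j := by simp only [sortedPartition, mem_Iic] at hi hj; omega
    exact le_rfl

lemma exists_isRefinement_sortedPartition {S : Finset ℝ} {s t : ℝ} (hS : ∀ x ∈ S, x ∈ Icc s t)
    {P : ℕ × (ℕ → ℝ)} (hP : IsPartition s t P) (hPS : ∀ i ≤ P.1, P.2 i ∈ S) :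
    ∃ σ, IsRefinement (sortedPartition S) P σ := by
  set e := S.orderEmbOfFin rfl
  have hpos : 0 < S.card := Finset.card_pos.2 ⟨_, hPS 0 (Nat.zero_le _)⟩
  have hindex : ∀ i, ∃ j : Fin S.card, i ≤ P.1 → e j = P.2 i := fun i => by
    by_cases hi : i ≤ P.1
    · have hmem : P.2 i ∈ range e := by rw [S.range_orderEmbOfFin]; exact hPS i hi
      obtain ⟨j, hj⟩ := hmem
      exact ⟨j, fun _ => hj⟩
    · exact ⟨⟨0, hpos⟩, fun h => absurd h hi⟩
  choose σ hσ using hindex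
  have hmem : ∀ j, e j ∈ Icc s t := fun j => hS _ (S.orderEmbOfFin_mem rfl j)
  refine ⟨fun i => σ i, fun i hi i' hi' hii' => ?_, ?_, ?_, fun i hi => ?_⟩
  · show σ i ≤ σ i'
    rw [← e.le_iff_le, hσ i hi, hσ i' hi']
    exact hP.monotoneOn hi hi' hii'
  · have h0 : σ 0 ≤ ⟨0, hpos⟩ := by
      rw [← e.le_iff_le, hσ 0 (Nat.zero_le _), hP.1]
      exact (hmem _).1
    exact Nat.le_zero.1 h0
  · have hlast : (⟨S.card - 1, Nat.sub_one_lt hpos.ne'⟩ : Fin S.card) ≤ σ P.1 := by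
      rw [← e.le_iff_le, hσ P.1 le_rfl, hP.2.1]
      exact (hmem _).2
    have hlast' : S.card - 1 ≤ σ P.1 := hlast
    have := (σ P.1).2
    simp only [sortedPartition]
    omega
  · simp only [sortedPartition, dif_pos (σ i).2]
    exact hσ i hi

lemma exists_common_refinement {s t : ℝ} {P Q : ℕ × (ℕ → ℝ)} (hP : IsPartition s t P)
    (hQ : IsPartition s t Q) :
    ∃ R, IsPartition s t R ∧ (∃ σ, IsRefinement R P σ) ∧ ∃ τ, IsRefinement R Q τ := by
  classical
  set S := (Finset.range (P.1 + 1)).image P.2 ∪ (Finset.range (Q.1 + 1)).image Q.2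
  have hS : ∀ x ∈ S, x ∈ Icc s t := by
    simp only [S, Finset.mem_union, Finset.mem_image, Finset.mem_range, Nat.lt_succ_iff]
    rintro x (⟨i, hi, rfl⟩ | ⟨i, hi, rfl⟩)
    exacts [hP.mem_Icc hi, hQ.mem_Icc hi]
  obtain ⟨σ, hσ⟩ := exists_isRefinement_sortedPartition hS hP fun i hi =>
    Finset.mem_union_left _ (Finset.mem_image_of_mem _ (Finset.mem_range.2 (Nat.lt_succ_of_le hi)))
  obtain ⟨τ, hτ⟩ := exists_isRefinement_sortedPartition hS hQ fun i hi =>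
    Finset.mem_union_right _ (Finset.mem_image_of_mem _ (Finset.mem_range.2 (Nat.lt_succ_of_le hi)))
  exact ⟨_, hσ.isPartition (monotoneOn_sortedPartition S) hP, ⟨σ, hσ⟩, τ, hτ⟩

lemma cauchy_map_stieltjesSum {f g : ℝ → H} {s t : ℝ} (hst : s ≤ t)
    (hf : ContinuousOn f (Icc s t)) (hg : BoundedVariationOn g (Icc s t)) :
    Cauchy (map (stieltjesSum f g) (finePartitions s t)) := by
  have := finePartitions_neBot hst
  refine Metric.cauchy_iff.2 ⟨inferInstance, fun ε hε => ?_⟩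
  set V := (eVariationOn g (Icc s t)).toReal
  have hV : 0 ≤ V := ENNReal.toReal_nonneg
  set η := ε / (2 * (V + 1))
  have hη : 0 < η := by positivity
  obtain ⟨δ, hδ, hfδ⟩ := Metric.uniformContinuousOn_iff_le.1
    (isCompact_Icc.uniformContinuousOn_of_continuous hf) η hη
  refine ⟨_, image_mem_map ((hasBasis_finePartitions s t).mem_of_mem hδ), ?_⟩
  rintro _ ⟨P, hP, rfl⟩ _ ⟨Q, hQ, rfl⟩
  obtain ⟨R, hR, ⟨σ, hσ⟩, τ, hτ⟩ := exists_common_refinement hP.1 hQ.1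
  have hclose : ∀ P : ℕ × (ℕ → ℝ), IsPartition s t P → (∀ i < P.1, P.2 (i + 1) - P.2 i < δ) →
      ∀ σ, IsRefinement R P σ → |stieltjesSum f g P - stieltjesSum f g R| ≤ η * V := by
    intro P hP hmesh σ hσ
    refine (abs_stieltjesSum_sub_le_of_isRefinement hσ fun i hi j hj => ?_).trans
      (mul_le_mul_of_nonneg_left
        (sum_norm_sub_le_eVariationOn hg hR.monotoneOn fun j hj => hR.mem_Icc hj) hη.le)
    have hjR := (hσ.mem_Icc_of_mem_Ico hR.monotoneOn hi hj)
    rw [← dist_eq_norm]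
    refine hfδ _ (hP.mem_Icc hi.le) _ (hR.mem_Icc (hσ.lt_of_mem_Ico hi hj).le) ?_
    rw [Real.dist_eq, abs_sub_comm, abs_of_nonneg (sub_nonneg.2 hjR.1)]
    linarith [hmesh i hi, hjR.2]
  have hηV : η * V < ε / 2 := by
    rw [div_mul_eq_mul_div, div_lt_iff₀ (by positivity)]
    nlinarith
  calc dist (stieltjesSum f g P) (stieltjesSum f g Q)
      ≤ |stieltjesSum f g P - stieltjesSum f g R| + |stieltjesSum f g Q - stieltjesSum f g R| := by
        rw [Real.dist_eq, abs_sub_comm (stieltjesSum f g Q)]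
        exact abs_sub_le _ _ _
    _ < ε := by linarith [hclose P hP.1 hP.2 σ hσ, hclose Q hQ.1 hQ.2 τ hτ]

lemma exists_isRSIntegral {f g : ℝ → H} {s t : ℝ} (hst : s ≤ t)
    (hf : ContinuousOn f (Icc s t)) (hg : BoundedVariationOn g (Icc s t)) :
    ∃ I, IsRSIntegral f g s t I := by
  have := finePartitions_neBot hst
  simp_rw [isRSIntegral_iff_tendsto]
  exact cauchy_map_iff_exists_tendsto.1 (cauchy_map_stieltjesSum hst hf hg)

lemma inner_le_mul_norm_of_eVariationOn_le {f k : ℝ → H} {w : H} {r b C : ℝ} (hrb : r < b)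
    (hf : ContinuousOn f (Icc r b)) (hk : BoundedVariationOn k (Icc r b))
    (hvar : ∀ᶠ ρ in 𝓝[>] r, (eVariationOn k (Icc r ρ)).toReal ≤ C * (ρ - r))
    (hint : ∀ ρ ∈ Ioc r b, ∀ I, IsRSIntegral f k r ρ I → ∫ σ in r..ρ, inner ℝ (f σ) w ≤ I) :
    inner ℝ (f r) w ≤ C * ‖f r‖ := by
  refine le_of_forall_pos_le_add_mul (c := C + ‖w‖) fun β hβ => ?_
  obtain ⟨δ, hδ, hfδ⟩ := Metric.continuousWithinAt_iff.1 (hf r ⟨le_rfl, hrb.le⟩) β hβ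
  have hnear : ∀ᶠ ρ in 𝓝[>] r, ρ ∈ Ioo r (min b (r + δ)) :=
    Ioo_mem_nhdsGT (lt_min hrb (by linarith))
  obtain ⟨ρ, hvarρ, hρ⟩ := (hvar.and hnear).exists
  have hρb : ρ ≤ b := hρ.2.le.trans (min_le_left _ _)
  have hsub : Icc r ρ ⊆ Icc r b := Icc_subset_Icc_right hρb
  have hclose : ∀ σ ∈ Icc r ρ, ‖f σ - f r‖ ≤ β := fun σ hσ => by
    rw [← dist_eq_norm]
    refine (hfδ (hsub hσ) ?_).le
    rw [Real.dist_eq, abs_of_nonneg (sub_nonneg.2 hσ.1)]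
    linarith [hσ.2, hρ.2.trans_le (min_le_right _ _)]
  obtain ⟨I, hI⟩ := exists_isRSIntegral hρ.1.le (hf.mono hsub) (hk.mono hsub)
  have hlower : (inner ℝ (f r) w - β * ‖w‖) * (ρ - r) ≤ ∫ σ in r..ρ, inner ℝ (f σ) w := by
    have hcmp := intervalIntegral.integral_mono_on hρ.1.le (intervalIntegrable_const (μ := volume))
      (((hf.mono hsub).inner continuousOn_const).intervalIntegrable_of_Icc hρ.1.le)
      fun σ hσ => show inner ℝ (f r) w - β * ‖w‖ ≤ inner ℝ (f σ) w by
        have := (abs_le.1 ((abs_real_inner_le_norm (f σ - f r) w).trans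
          (mul_le_mul_of_nonneg_right (hclose σ hσ) (norm_nonneg w)))).1
        rw [inner_sub_left] at this
        linarith
    rwa [intervalIntegral.integral_const, smul_eq_mul, mul_comm] at hcmp
  have hupper : I ≤ (‖f r‖ + β) * (C * (ρ - r)) := by
    refine (le_abs_self I).trans ((hI.abs_le hρ.1.le (fun σ hσ => ?_) (hk.mono hsub)).trans
      (mul_le_mul_of_nonneg_left hvarρ (by positivity)))
    linarith [norm_le_insert' (f σ) (f r), hclose σ hσ]
  have hchain : (inner ℝ (f r) w - β * ‖w‖) * (ρ - r) ≤ (‖f r‖ + β) * C * (ρ - r) := by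
    linarith [hint ρ ⟨hρ.1, hρb⟩ I hI]
  linear_combination le_of_mul_le_mul_right hchain (sub_pos.2 hρ.1)

end RiemannStieltjes

section MonotoneOperator

variable {H : Type*} [NormedAddCommGroup H] [InnerProductSpace ℝ H]

def IsMonotoneOperator (A : Set (H × H)) : Prop :=
  ∀ p ∈ A, ∀ q ∈ A, (0 : ℝ) ≤ inner ℝ (p.1 - q.1) (p.2 - q.2)

/-- `J ε` and `Ay ε` play the roles of the resolvent `(1 + εA)⁻¹` and the Yosida approximation. -/
def IsResolventFamily (A : Set (H × H)) (J Ay : ℝ → H → H) : Prop :=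
  ∀ ε : ℝ, 0 < ε → ∀ z : H, (J ε z, Ay ε z) ∈ A ∧ z = J ε z + ε • Ay ε z

variable {A : Set (H × H)} {J Ay : ℝ → H → H}

lemma midpoint_mem_closure_fst_of_inner_le (hJ : IsResolventFamily A J Ay)
    {a b : H} {Ca Cb : ℝ} (hCa : 0 ≤ Ca) (hCb : 0 ≤ Cb)
    (ha : ∀ p ∈ A, inner ℝ (a - p.1) p.2 ≤ Ca * ‖a - p.1‖)
    (hb : ∀ p ∈ A, inner ℝ (b - p.1) p.2 ≤ Cb * ‖b - p.1‖) :
    (2 : ℝ)⁻¹ • (a + b) ∈ closure (Prod.fst '' A) := by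
  set z := (2 : ℝ)⁻¹ • (a + b)
  set c := Ca * ‖a - z‖ + Cb * ‖b - z‖
  have hc : 0 ≤ c := by positivity
  -- testing `ha`, `hb` at `(J ε z, Ay ε z)` gives `2 q² ≤ ε (c + (Ca + Cb) q)` for `q = ‖z - J ε z‖`
  have hdist : ∀ ε > 0, ‖z - J ε z‖ ≤ ε * (Ca + Cb) + √(ε * c) := by
    intro ε hε
    set q := ‖z - J ε z‖
    have hzJ : z - J ε z = ε • Ay ε z := sub_eq_of_eq_add' (hJ ε hε z).2
    have hq : q = ε * ‖Ay ε z‖ := by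
      rw [show q = ‖z - J ε z‖ from rfl, hzJ, norm_smul, Real.norm_of_nonneg hε.le]
    have hab : a - J ε z + (b - J ε z) = (2 * ε) • Ay ε z := by
      rw [mul_smul, ← hzJ]
      module
    have hsum : inner ℝ (a - J ε z) (Ay ε z) + inner ℝ (b - J ε z) (Ay ε z)
        ≤ c + (Ca + Cb) * q := by
      have hna : ‖a - J ε z‖ ≤ ‖a - z‖ + q := norm_sub_le_norm_sub_add_norm_sub _ _ _
      have hnb : ‖b - J ε z‖ ≤ ‖b - z‖ + q := norm_sub_le_norm_sub_add_norm_sub _ _ _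
      nlinarith [ha _ (hJ ε hε z).1, hb _ (hJ ε hε z).1]
    rw [← inner_add_left, hab, real_inner_smul_left, real_inner_self_eq_norm_sq] at hsum
    refine le_add_sqrt_of_two_mul_sq_le (by positivity) (by positivity) ?_
    rw [hq] at hsum ⊢
    nlinarith [mul_le_mul_of_nonneg_left hsum hε.le]
  have hlim : Tendsto (fun ε => J ε z) (𝓝[>] 0) (𝓝 z) := by
    rw [tendsto_iff_norm_sub_tendsto_zero]
    refine squeeze_zero' (Eventually.of_forall fun _ => norm_nonneg _)
      (eventually_nhdsWithin_of_forall fun ε hε => (norm_sub_rev _ _).trans_le (hdist ε hε)) ?_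
    have hcont : Continuous fun ε : ℝ => ε * (Ca + Cb) + √(ε * c) := by fun_prop
    simpa using (hcont.tendsto 0).mono_left nhdsWithin_le_nhds
  exact mem_closure_of_tendsto hlim
    (eventually_nhdsWithin_of_forall fun ε hε => ⟨_, (hJ ε hε z).1, rfl⟩)

lemma norm_resolvent_sub_le (hA : IsMonotoneOperator A) (hJ : IsResolventFamily A J Ay)
    {ε : ℝ} (hε : 0 < ε) (z z' : H) : ‖J ε z - J ε z'‖ ≤ ‖z - z'‖ := by
  set d := J ε z - J ε z'
  have hmon : 0 ≤ inner ℝ d (Ay ε z - Ay ε z') := hA _ (hJ ε hε z).1 _ (hJ ε hε z').1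
  have hzz : z - z' = d + ε • (Ay ε z - Ay ε z') := by
    conv_lhs => rw [(hJ ε hε z).2, (hJ ε hε z').2]
    module
  have hsq : ‖d‖ ^ 2 ≤ ‖d‖ * ‖z - z'‖ := by
    have : inner ℝ d (z - z') = ‖d‖ ^ 2 + ε * inner ℝ d (Ay ε z - Ay ε z') := by
      rw [hzz, inner_add_right, real_inner_smul_right, real_inner_self_eq_norm_sq]
    nlinarith [real_inner_le_norm d (z - z')]
  nlinarith [norm_nonneg d, norm_nonneg (z - z')]

lemma norm_smul_yosida_sub_le (hA : IsMonotoneOperator A) (hJ : IsResolventFamily A J Ay)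
    {ε : ℝ} (hε : 0 < ε) (z z' : H) : ‖ε • Ay ε z - ε • Ay ε z'‖ ≤ 2 * ‖z - z'‖ := by
  rw [← sub_eq_of_eq_add' (hJ ε hε z).2, ← sub_eq_of_eq_add' (hJ ε hε z').2,
    show z - J ε z - (z' - J ε z') = (z - z') - (J ε z - J ε z') by abel]
  linarith [norm_sub_le (z - z') (J ε z - J ε z'), norm_resolvent_sub_le hA hJ hε z z']

lemma eventually_forall_norm_smul_yosida_lt (hA : IsMonotoneOperator A)
    (hJ : IsResolventFamily A J Ay)
    (hsmall : ∀ z ∈ closure (Prod.fst '' A), Tendsto (fun ε : ℝ => ε • Ay ε z) (𝓝[>] 0) (𝓝 0))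
    {K : Set H} (hK : IsCompact K) (hKA : K ⊆ closure (Prod.fst '' A)) {η : ℝ} (hη : 0 < η) :
    ∀ᶠ ε in 𝓝[>] (0 : ℝ), ∀ w ∈ K, ‖ε • Ay ε w‖ < η := by
  obtain ⟨C, hCK, hCfin, hcover⟩ := finite_cover_balls_of_compact hK (by positivity : 0 < η / 3)
  have hcenters : ∀ᶠ ε in 𝓝[>] (0 : ℝ), ∀ c ∈ C, ‖ε • Ay ε c‖ < η / 3 :=
    hCfin.eventually_all.2 fun c hc => by
      have hc0 := (hsmall c (hKA (hCK hc))).norm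
      rw [norm_zero] at hc0
      exact hc0.eventually (gt_mem_nhds (by positivity))
  filter_upwards [hcenters, self_mem_nhdsWithin] with ε hε hε0 w hw
  obtain ⟨c, hc, hwc⟩ := mem_iUnion₂.1 (hcover hw)
  have hwc' : ‖w - c‖ < η / 3 := by rwa [← dist_eq_norm]
  linarith [norm_le_insert' (ε • Ay ε w) (ε • Ay ε c), hε c hc,
    norm_smul_yosida_sub_le hA hJ hε0 w c]

end MonotoneOperator

section Realization

variable {H : Type*} [NormedAddCommGroup H] [InnerProductSpace ℝ H]

def MemRealization (A : Set (H × H)) (T : ℝ) (x k : ℝ → H) : Prop :=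
  ∀ s t : ℝ, 0 ≤ s → s ≤ t → t ≤ T → ∀ u us : ℝ → H,
    ContinuousOn u (Icc s t) → ContinuousOn us (Icc s t) → (∀ r ∈ Icc s t, (u r, us r) ∈ A) →
    ∀ I : ℝ, IsRSIntegral (fun r => x r - u r) k s t I →
      0 ≤ I - ∫ r in s..t, (inner ℝ (x r - u r) (us r) : ℝ)

namespace MemRealization

variable {A : Set (H × H)} {T : ℝ} {x k : ℝ → H}

lemma ae_inner_le_mul_norm (hk : MemRealization A T x k) (hx : ContinuousOn x (Icc 0 T))
    (hkbv : BoundedVariationOn k (Icc 0 T)) :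
    ∀ᵐ r, r ∈ Ioo 0 T → ∃ C ≥ 0, ∀ p ∈ A, inner ℝ (x r - p.1) p.2 ≤ C * ‖x r - p.1‖ := by
  filter_upwards [ae_eventually_eVariationOn_Icc_le hkbv] with r hvar hr
  obtain ⟨C, hC, hCvar⟩ := hvar hr
  have hsub : Icc r T ⊆ Icc 0 T := Icc_subset_Icc_left hr.1.le
  refine ⟨C, hC, fun p hp => inner_le_mul_norm_of_eVariationOn_le (f := fun ρ => x ρ - p.1) hr.2
    ((hx.mono hsub).sub continuousOn_const) (hkbv.mono hsub) hCvar fun ρ hρ I hI => ?_⟩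
  have := hk r ρ hr.1.le hρ.1.le hρ.2 (fun _ => p.1) (fun _ => p.2) continuousOn_const
    continuousOn_const (fun _ _ => hp) I hI
  linarith

lemma half_add_mul_eVariationOn_nonneg {y l : ℝ → H} (hk : MemRealization A T x k)
    (hl : MemRealization A T y l) {s t : ℝ} (hs : 0 ≤ s) (hst : s ≤ t) (htT : t ≤ T)
    (hx : ContinuousOn x (Icc s t)) (hy : ContinuousOn y (Icc s t))
    (hkbv : BoundedVariationOn k (Icc s t)) (hlbv : BoundedVariationOn l (Icc s t))
    {u w : ℝ → H} (hu : ContinuousOn u (Icc s t)) (hw : ContinuousOn w (Icc s t))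
    (huw : ∀ r ∈ Icc s t, (u r, w r) ∈ A) {c η : ℝ} (hc : 0 ≤ c)
    (hsplit : ∀ r, (2 : ℝ)⁻¹ • (x r + y r) = u r + c • w r)
    (hsmall : ∀ r ∈ Icc s t, ‖c • w r‖ ≤ η)
    {I : ℝ} (hI : IsRSIntegral (fun r => x r - y r) (fun r => k r - l r) s t I) :
    0 ≤ 2⁻¹ * I + η * ((eVariationOn k (Icc s t)).toReal + (eVariationOn l (Icc s t)).toReal) := by
  have hcw : ContinuousOn (fun r => c • w r) (Icc s t) := continuousOn_const.smul hw
  obtain ⟨Ix, hIx⟩ := exists_isRSIntegral (f := fun r => x r - u r) hst (hx.sub hu) hkbv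
  obtain ⟨Jk, hJk⟩ := exists_isRSIntegral hst hcw hkbv
  obtain ⟨Jl, hJl⟩ := exists_isRSIntegral hst hcw hlbv
  have hIy : IsRSIntegral (fun r => y r - u r) l s t (2⁻¹ * I + Jk + Jl - Ix) := by
    rw [isRSIntegral_iff_tendsto] at hI hIx hJk hJl ⊢
    refine ((((hI.const_mul 2⁻¹).add hJk).add hJl).sub hIx).congr fun P => ?_
    simp only [stieltjesSum, Finset.mul_sum, ← Finset.sum_add_distrib, ← Finset.sum_sub_distrib]
    refine Finset.sum_congr rfl fun i _ => ?_
    rw [eq_sub_of_add_eq (hsplit (P.2 i)).symm]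
    simp only [inner_sub_left, inner_add_left, inner_sub_right, real_inner_smul_left]
    ring
  have hxk := hk s t hs hst htT u w hu hw huw Ix hIx
  have hyl := hl s t hs hst htT u w hu hw huw _ hIy
  have hint : 0 ≤ (∫ r in s..t, inner ℝ (x r - u r) (w r))
      + ∫ r in s..t, inner ℝ (y r - u r) (w r) := by
    rw [← intervalIntegral.integral_add
      (((hx.sub hu).inner hw).intervalIntegrable_of_Icc hst)
      (((hy.sub hu).inner hw).intervalIntegrable_of_Icc hst)]
    refine intervalIntegral.integral_nonneg hst fun r _ => ?_
    have hsum : x r - u r + (y r - u r) = (2 * c) • w r := by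
      rw [eq_sub_of_add_eq (hsplit r).symm]
      module
    rw [← inner_add_left, hsum, real_inner_smul_left, real_inner_self_eq_norm_sq]
    positivity
  have hJk' := (le_abs_self Jk).trans (hJk.abs_le hst hsmall hkbv)
  have hJl' := (le_abs_self Jl).trans (hJl.abs_le hst hsmall hlbv)
  linarith

lemma midpoint_mem_closure_fst {y l : ℝ → H} {J Ay : ℝ → H → H} (hJ : IsResolventFamily A J Ay)
    (hk : MemRealization A T x k) (hl : MemRealization A T y l)
    (hx : ContinuousOn x (Icc 0 T)) (hy : ContinuousOn y (Icc 0 T))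
    (hkbv : BoundedVariationOn k (Icc 0 T)) (hlbv : BoundedVariationOn l (Icc 0 T))
    {s t : ℝ} (hs : 0 ≤ s) (hst : s < t) (htT : t ≤ T) :
    ∀ r ∈ Icc s t, (2 : ℝ)⁻¹ • (x r + y r) ∈ closure (Prod.fst '' A) := by
  refine forall_mem_Icc_of_ae_mem isClosed_closure hst
    (((hx.add hy).const_smul _).mono (Icc_subset_Icc hs htT)) ?_
  filter_upwards [hk.ae_inner_le_mul_norm hx hkbv, hl.ae_inner_le_mul_norm hy hlbv]
    with r hxr hyr hr
  obtain ⟨Cx, hCx, hxr⟩ := hxr (Ioo_subset_Ioo hs htT hr)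
  obtain ⟨Cy, hCy, hyr⟩ := hyr (Ioo_subset_Ioo hs htT hr)
  exact midpoint_mem_closure_fst_of_inner_le hJ hCx hCy hxr hyr

end MemRealization

end Realization

theorem realization_monotone_general
    {H : Type*} [NormedAddCommGroup H] [InnerProductSpace ℝ H]
    (A : Set (H × H))
    (hmono : ∀ p ∈ A, ∀ q ∈ A, (0 : ℝ) ≤ inner ℝ (p.1 - q.1) (p.2 - q.2))
    (T : ℝ)
    (x y k l : ℝ → H)
    (hx : ContinuousOn x (Set.Icc 0 T)) (hy : ContinuousOn y (Set.Icc 0 T))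
    (hkbv : BoundedVariationOn k (Set.Icc 0 T))
    (hlbv : BoundedVariationOn l (Set.Icc 0 T))
    (hk : ∀ s t : ℝ, 0 ≤ s → s ≤ t → t ≤ T → ∀ u us : ℝ → H,
      ContinuousOn u (Set.Icc s t) → ContinuousOn us (Set.Icc s t) →
      (∀ r ∈ Set.Icc s t, (u r, us r) ∈ A) →
      ∀ I : ℝ, IsRSIntegral (fun r => x r - u r) k s t I →
        0 ≤ I - ∫ r in s..t, (inner ℝ (x r - u r) (us r) : ℝ))
    (hl : ∀ s t : ℝ, 0 ≤ s → s ≤ t → t ≤ T → ∀ u us : ℝ → H,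
      ContinuousOn u (Set.Icc s t) → ContinuousOn us (Set.Icc s t) →
      (∀ r ∈ Set.Icc s t, (u r, us r) ∈ A) →
      ∀ I : ℝ, IsRSIntegral (fun r => y r - u r) l s t I →
        0 ≤ I - ∫ r in s..t, (inner ℝ (y r - u r) (us r) : ℝ))
    (Jres Ayos : ℝ → H → H)
    (hsel : ∀ ε : ℝ, 0 < ε →
      Continuous (Jres ε) ∧ Continuous (Ayos ε) ∧
      (∀ z : H, (Jres ε z, Ayos ε z) ∈ A) ∧
      (∀ z : H, z = Jres ε z + ε • Ayos ε z))
    (hyosida_small : ∀ z ∈ closure (Prod.fst '' A),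
      Filter.Tendsto (fun ε : ℝ => ε • Ayos ε z)
        (nhdsWithin 0 (Set.Ioi 0)) (nhds (0 : H))) :
    ∀ s t : ℝ, 0 ≤ s → s ≤ t → t ≤ T →
      ∀ I : ℝ, IsRSIntegral (fun r => x r - y r) (fun r => k r - l r) s t I →
        0 ≤ I := by
  intro s t hs hst htT I hI
  obtain rfl | hst := hst.eq_or_lt
  · exact hI.eq_zero_of_same.ge
  have hsub : Icc s t ⊆ Icc 0 T := Icc_subset_Icc hs htT
  have hJ : IsResolventFamily A Jres Ayos := fun ε hε z =>
    ⟨(hsel ε hε).2.2.1 z, (hsel ε hε).2.2.2 z⟩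
  set z : ℝ → H := fun r => (2 : ℝ)⁻¹ • (x r + y r)
  have hz : ContinuousOn z (Icc s t) := ((hx.add hy).const_smul _).mono hsub
  have hzA : z '' Icc s t ⊆ closure (Prod.fst '' A) := by
    rintro _ ⟨r, hr, rfl⟩
    exact MemRealization.midpoint_mem_closure_fst hJ hk hl hx hy hkbv hlbv hs hst htT r hr
  have key : ∀ η > 0, 0 ≤ 2⁻¹ * I + η *
      ((eVariationOn k (Icc s t)).toReal + (eVariationOn l (Icc s t)).toReal) := fun η hη => by
    obtain ⟨ε, hsmall, hε⟩ := (eventually_forall_norm_smul_yosida_lt hmono hJ hyosida_small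
      (isCompact_Icc.image_of_continuousOn hz) hzA hη |>.and self_mem_nhdsWithin).exists
    obtain ⟨hJc, hAc, -, -⟩ := hsel ε hε
    exact MemRealization.half_add_mul_eVariationOn_nonneg hk hl hs hst.le htT (hx.mono hsub)
      (hy.mono hsub) (hkbv.mono hsub) (hlbv.mono hsub) (hJc.comp_continuousOn hz)
      (hAc.comp_continuousOn hz) (fun r _ => (hJ ε hε (z r)).1) hε.le (fun r => (hJ ε hε (z r)).2)
      (fun r hr => (hsmall (z r) ⟨r, hr, rfl⟩).le) hI
  linarith [le_of_forall_pos_le_add_mul key]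

/-- Monotonicity of the realization on `C([0,T];H)` of a maximal monotone operator `A`:
if `(x,k)` and `(y,ℓ)` both satisfy `∫_s^t ⟨ · (r) − u(r), dk(r) − u*(r)dr⟩ ≥ 0` against
every continuous selection `(u,u*)` of `A`, and `A` admits continuous resolvent/Yosida
selections `J_ε, A_ε` with `z = J_ε z + ε • A_ε z`, `(J_ε z, A_ε z) ∈ A` and
`ε • A_ε z → 0`, then `∫_s^t ⟨x(r) − y(r), dk(r) − dℓ(r)⟩ ≥ 0`. -/
theorem realization_monotone
    {H : Type*} [NormedAddCommGroup H] [InnerProductSpace ℝ H]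
    (A : Set (H × H))
    (hmono : ∀ p ∈ A, ∀ q ∈ A, (0 : ℝ) ≤ inner ℝ (p.1 - q.1) (p.2 - q.2))
    (hmax : ∀ x xs : H, (∀ u ∈ A, (0 : ℝ) ≤ inner ℝ (x - u.1) (xs - u.2)) → (x, xs) ∈ A)
    (T : ℝ) (hT : 0 ≤ T)
    (x y k l : ℝ → H)
    (hx : ContinuousOn x (Set.Icc 0 T)) (hy : ContinuousOn y (Set.Icc 0 T))
    (hkcont : ContinuousOn k (Set.Icc 0 T)) (hlcont : ContinuousOn l (Set.Icc 0 T))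
    (hkbv : BoundedVariationOn k (Set.Icc 0 T))
    (hlbv : BoundedVariationOn l (Set.Icc 0 T))
    (hk : ∀ s t : ℝ, 0 ≤ s → s ≤ t → t ≤ T → ∀ u us : ℝ → H,
      ContinuousOn u (Set.Icc s t) → ContinuousOn us (Set.Icc s t) →
      (∀ r ∈ Set.Icc s t, (u r, us r) ∈ A) →
      ∀ I : ℝ, IsRSIntegral (fun r => x r - u r) k s t I →
        0 ≤ I - ∫ r in s..t, (inner ℝ (x r - u r) (us r) : ℝ))
    (hl : ∀ s t : ℝ, 0 ≤ s → s ≤ t → t ≤ T → ∀ u us : ℝ → H,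
      ContinuousOn u (Set.Icc s t) → ContinuousOn us (Set.Icc s t) →
      (∀ r ∈ Set.Icc s t, (u r, us r) ∈ A) →
      ∀ I : ℝ, IsRSIntegral (fun r => y r - u r) l s t I →
        0 ≤ I - ∫ r in s..t, (inner ℝ (y r - u r) (us r) : ℝ))
    (Jres Ayos : ℝ → H → H)
    (hsel : ∀ ε : ℝ, 0 < ε →
      Continuous (Jres ε) ∧ Continuous (Ayos ε) ∧
      (∀ z : H, (Jres ε z, Ayos ε z) ∈ A) ∧
      (∀ z : H, z = Jres ε z + ε • Ayos ε z))
    (hyosida_small : ∀ z ∈ closure (Prod.fst '' A),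
      Filter.Tendsto (fun ε : ℝ => ε • Ayos ε z)
        (nhdsWithin 0 (Set.Ioi 0)) (nhds (0 : H))) :
    ∀ s t : ℝ, 0 ≤ s → s ≤ t → t ≤ T →
      ∀ I : ℝ, IsRSIntegral (fun r => x r - y r) (fun r => k r - l r) s t I →
        0 ≤ I :=
  realization_monotone_general A hmono T x y k l hx hy hkbv hlbv hk hl Jres Ayos hsel hyosida_small
end
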